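/- For every k ≥ −1, the functor J: {−1, 0, 1, …, k} → ([k] ↓ σ_a) from the discrete category {−1, 0, …, k} to the comma category of the ordinal sum functor σ_a: Δ_a × Δ_a → Δ_a under the object [k], defined by j ↦ (([j], [k−j−1]), id_{[k]}), is an initial functor; equivalently, its opposite {−1, 0, …, k} → (σ_aᵒᵖ ↓ [k]) is a final functor. -/

import Mathlib

/-!
A morphism `J j ⟶ (l₁, l₂, γ)` in `[k] ↓ σₐ` is a pair `(α₁, α₂)` with `σₐ(α₁, α₂) = γ`
(up to the identification `[k] = [j] ⋆ [k-j-1]`). Such a pair forces `j + 1` to be the number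
of points that `γ` sends into the first block `[l₁]`, and then `α₁`, `α₂` are the restrictions
of `γ` to the two halves; conversely these restrictions always exist. So every comma category
`J ↓ c` has exactly one object and one morphism, and is in particular connected.
-/

open CategoryTheory CategoryTheory.Limits Simplicial Opposite

universe v u

namespace OrdSum

/-- The "ordinal sum" of two monotone maps between finite linear orders. -/
def ordJoin {m n m' n' : ℕ} (f : Fin m →o Fin m') (g : Fin n →o Fin n') :
    Fin (m + n) →o Fin (m' + n') where
  toFun i :=
    if h : (i : ℕ) < m then Fin.castAdd n' (f ⟨i, h⟩)
    else Fin.natAdd m' (g ⟨(i : ℕ) - m, by omega⟩)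
  monotone' := by
    intro i j hij
    have hij' : (i : ℕ) ≤ (j : ℕ) := hij
    dsimp only
    by_cases hi : (i : ℕ) < m <;> by_cases hj : (j : ℕ) < m
    · simp only [dif_pos hi, dif_pos hj, Fin.le_def, Fin.coe_castAdd]
      exact f.monotone (show (⟨(i:ℕ), hi⟩ : Fin m) ≤ ⟨(j:ℕ), hj⟩ from hij')
    · simp only [dif_pos hi, dif_neg hj, Fin.le_def, Fin.coe_castAdd, Fin.coe_natAdd]
      have := (f ⟨(i:ℕ), hi⟩).isLt
      omega
    · omega
    · simp only [dif_neg hi, dif_neg hj, Fin.le_def, Fin.coe_natAdd]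
      have : (⟨(i:ℕ) - m, by omega⟩ : Fin n) ≤ ⟨(j:ℕ) - m, by omega⟩ := by
        simp only [Fin.mk_le_mk]; omega
      have := g.monotone this
      omega

theorem ordJoin_id (m n : ℕ) :
    ordJoin (OrderHom.id (α := Fin m)) (OrderHom.id (α := Fin n)) = OrderHom.id := by
  ext i
  simp only [ordJoin, OrderHom.coe_mk, OrderHom.id_coe, id_eq]
  by_cases h : (i : ℕ) < m
  · simp [dif_pos h]
  · simp only [dif_neg h, Fin.coe_natAdd]
    omega

theorem ordJoin_comp {m n m' n' m'' n'' : ℕ}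
    (f : Fin m →o Fin m') (g : Fin n →o Fin n')
    (f' : Fin m' →o Fin m'') (g' : Fin n' →o Fin n'') :
    ordJoin (f'.comp f) (g'.comp g) = (ordJoin f' g').comp (ordJoin f g) := by
  ext i
  have e : ∀ {a b c d : ℕ} (F : Fin a →o Fin c) (G : Fin b →o Fin d) (x : Fin (a + b)),
      ordJoin F G x = if h : (x : ℕ) < a then Fin.castAdd d (F ⟨x, h⟩)
        else Fin.natAdd c (G ⟨(x : ℕ) - a, by omega⟩) := fun _ _ _ => rfl
  simp only [OrderHom.comp_coe, Function.comp_apply, e]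
  by_cases h : (i : ℕ) < m
  · have h1 : ((Fin.castAdd n' (f ⟨(i:ℕ), h⟩)) : ℕ) < m' := (f ⟨(i:ℕ), h⟩).isLt
    simp only [dif_pos h, dif_pos h1]
    congr 1
  · have h1 : ¬ ((Fin.natAdd m' (g ⟨(i:ℕ) - m, by omega⟩)) : ℕ) < m' := by
      simp only [Fin.coe_natAdd]; omega
    simp only [dif_neg h]
    rw [dif_neg h1]
    simp only [OrderHom.comp_coe, Function.comp_apply, Fin.coe_natAdd, Nat.add_right_cancel_iff]
    congr 2
    apply Fin.ext
    simp

/-- The ordinal sum functor `σ : Δ × Δ → Δ`, `([k],[l]) ↦ [k+1+l]`. -/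
def ordSum : SimplexCategory × SimplexCategory ⥤ SimplexCategory where
  obj x := SimplexCategory.mk (x.1.len + 1 + x.2.len)
  map {x y} f := SimplexCategory.Hom.mk
    (ordJoin (m := x.1.len + 1) (n := x.2.len + 1) (m' := y.1.len + 1) (n' := y.2.len + 1)
      f.1.toOrderHom f.2.toOrderHom)
  map_id x := by
    apply SimplexCategory.Hom.ext
    simp only [SimplexCategory.Hom.toOrderHom_mk]
    exact ordJoin_id _ _
  map_comp {x y z} f g := by
    apply SimplexCategory.Hom.ext
    simp only [SimplexCategory.Hom.toOrderHom_mk]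
    exact ordJoin_comp _ _ _ _

/-- The augmented simplex category `Δₐ`: the object `⟨n⟩` is the linear order with `n`
elements (so `⟨0⟩` is `[-1] = ∅` and `⟨n+1⟩` is `[n]`); morphisms are monotone maps. -/
@[ext] structure AugSimplex where
  len : ℕ

instance : Category.{0} AugSimplex where
  Hom a b := Fin a.len →o Fin b.len
  id _ := OrderHom.id
  comp f g := g.comp f

/-- The inclusion `ι : Δ → Δₐ`. -/
def incl : SimplexCategory ⥤ AugSimplex where
  obj x := ⟨x.len + 1⟩
  map f := f.toOrderHom
  map_id _ := rfl
  map_comp _ _ := rfl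

/-- The ordinal sum functor `σₐ : Δₐ × Δₐ → Δₐ`. -/
def ordSumAug : AugSimplex × AugSimplex ⥤ AugSimplex where
  obj x := ⟨x.1.len + x.2.len⟩
  map f := ordJoin f.1 f.2
  map_id _ := ordJoin_id _ _
  map_comp _ _ := ordJoin_comp _ _ _ _

variable {C : Type u} [Category.{v} C]

variable (C) in
/-- Total décalage `σ* : Fun(Δᵒᵖ, C) ⥤ Fun((Δ×Δ)ᵒᵖ, C)`, precomposition with ordinal sum. -/
def decF : (SimplexCategoryᵒᵖ ⥤ C) ⥤ ((SimplexCategory × SimplexCategory)ᵒᵖ ⥤ C) :=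
  (Functor.whiskeringLeft _ _ C).obj ordSum.op

variable (C) in
/-- The functor sending a bisimplicial object `Y` to `[k] ↦ Y_{k,−}`. -/
def rowsF : ((SimplexCategory × SimplexCategory)ᵒᵖ ⥤ C) ⥤
    (SimplexCategoryᵒᵖ ⥤ (SimplexCategoryᵒᵖ ⥤ C)) :=
  (Functor.whiskeringLeft _ _ C).obj
    (prodOpEquiv (C := SimplexCategory) (D := SimplexCategory)).inverse ⋙ Functor.curry

variable (C) in
/-- The functor sending a bisimplicial object `Y` to `[k] ↦ Y_{−,k}`. -/
def colsF : ((SimplexCategory × SimplexCategory)ᵒᵖ ⥤ C) ⥤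
    (SimplexCategoryᵒᵖ ⥤ (SimplexCategoryᵒᵖ ⥤ C)) :=
  (Functor.whiskeringLeft _ _ C).obj
    (CategoryTheory.Prod.swap SimplexCategoryᵒᵖ SimplexCategoryᵒᵖ ⋙
      (prodOpEquiv (C := SimplexCategory) (D := SimplexCategory)).inverse) ⋙ Functor.curry

/-- The simplicial object `Y_{k,−}`. -/
def rowS (Y : (SimplexCategory × SimplexCategory)ᵒᵖ ⥤ C) (k : SimplexCategory) :
    SimplexCategoryᵒᵖ ⥤ C :=
  ((rowsF C).obj Y).obj (op k)

/-- The simplicial object `Y_{−,k}`. -/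
def colS (Y : (SimplexCategory × SimplexCategory)ᵒᵖ ⥤ C) (k : SimplexCategory) :
    SimplexCategoryᵒᵖ ⥤ C :=
  ((colsF C).obj Y).obj (op k)

/-- `π₀` of a simplicial object: the coequalizer of the two face maps `X₁ ⇉ X₀`. -/
noncomputable def pi0F [HasCoequalizers C] : (SimplexCategoryᵒᵖ ⥤ C) ⥤ C where
  obj X := coequalizer (X.map (SimplexCategory.δ (1 : Fin 2)).op)
    (X.map (SimplexCategory.δ (0 : Fin 2)).op)
  map {X Y} f := coequalizer.desc (f.app (op ⦋0⦌) ≫ coequalizer.π _ _) (by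
    rw [← Category.assoc, ← Category.assoc, f.naturality, f.naturality,
      Category.assoc, Category.assoc, coequalizer.condition])
  map_id X := by
    apply coequalizer.hom_ext
    simp
  map_comp f g := by
    apply coequalizer.hom_ext
    simp

/-- The canonical quotient map `X₀ → π₀(X)`. -/
noncomputable def pi0π [HasCoequalizers C] (X : SimplexCategoryᵒᵖ ⥤ C) :
    X.obj (op ⦋0⦌) ⟶ pi0F.obj X :=
  coequalizer.π _ _

variable (C) in
/-- `Y ↦ ([k] ↦ π₀(Y_{k,−}))`. -/
noncomputable def rowsPi0F [HasCoequalizers C] :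
    ((SimplexCategory × SimplexCategory)ᵒᵖ ⥤ C) ⥤ (SimplexCategoryᵒᵖ ⥤ C) :=
  rowsF C ⋙ (Functor.whiskeringRight _ _ _).obj pi0F

variable (C) in
/-- `Y ↦ ([k] ↦ π₀(Y_{−,k}))`. -/
noncomputable def colsPi0F [HasCoequalizers C] :
    ((SimplexCategory × SimplexCategory)ᵒᵖ ⥤ C) ⥤ (SimplexCategoryᵒᵖ ⥤ C) :=
  colsF C ⋙ (Functor.whiskeringRight _ _ _).obj pi0F

variable (C) in
/-- The levelwise tensor `X ⊗ K` of a simplicial object with a simplicial set,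
`(X ⊗ K)ₖ = ∐_{Kₖ} Xₖ`, as a functor in `X`. -/
noncomputable def tensorF [HasColimits C] (K : SSet.{v}) :
    (SimplexCategoryᵒᵖ ⥤ C) ⥤ (SimplexCategoryᵒᵖ ⥤ C) where
  obj X :=
    { obj := fun n => ∐ (fun (_ : K.obj n) => X.obj n)
      map := fun {n m} f => Sigma.desc
        (fun s => X.map f ≫ Sigma.ι (fun (_ : K.obj m) => X.obj m) (K.map f s))
      map_id := fun n => by
        apply Sigma.hom_ext
        intro s
        simp [FunctorToTypes.map_id_apply]
      map_comp := fun {n m l} f g => by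
        apply Sigma.hom_ext
        intro s
        simp [FunctorToTypes.map_comp_apply] }
  map {X Y} f :=
    { app := fun n => Limits.Sigma.desc
        (fun (s : K.obj n) => f.app n ≫ Sigma.ι (fun (_ : K.obj n) => Y.obj n) s)
      naturality := fun {n m} g => by
        apply Sigma.hom_ext
        intro s
        simp }
  map_id X := by
    ext n : 2
    simp
  map_comp f g := by
    ext n : 2
    simp

variable (C) in
/-- The canonical projection `X ⊗ K ⟶ X`, induced by `K ⟶ Δ[0]`. -/
noncomputable def tensorProj [HasColimits C] (K : SSet.{v}) :
    tensorF C K ⟶ 𝟭 (SimplexCategoryᵒᵖ ⥤ C) where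
  app X :=
    { app := fun n => Sigma.desc (fun _ => 𝟙 (X.obj n))
      naturality := fun {n m} g => by
        apply Sigma.hom_ext
        intro s
        simp [tensorF] }
  naturality {X Y} f := by
    ext n : 2
    apply Sigma.hom_ext
    intro s
    simp [tensorF]



/-- The splitting index: `sigmaIdx β p` is the number of elements `j` of the source with
`β j < p`; equivalently `j_β + 1` where `j_β` is the largest index landing in the first block. -/
def sigmaIdx {m n : ℕ} (β : Fin m →o Fin n) (p : ℕ) : ℕ :=
  (Finset.univ.filter fun j : Fin m => ((β j) : ℕ) < p).card

theorem sigmaIdx_le {m n : ℕ} (β : Fin m →o Fin n) (p : ℕ) : sigmaIdx β p ≤ m := by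
  classical
  exact le_trans (Finset.card_filter_le _ _) (by simp)

theorem lt_sigmaIdx_iff {m n : ℕ} (β : Fin m →o Fin n) (p : ℕ) (j : Fin m) :
    (j : ℕ) < sigmaIdx β p ↔ ((β j) : ℕ) < p := by
  classical
  constructor
  · intro h
    by_contra hb
    push_neg at hb
    have hsub : (Finset.univ.filter fun j' : Fin m => ((β j') : ℕ) < p) ⊆ Finset.Iio j := by
      intro x hx
      simp only [Finset.mem_filter, Finset.mem_univ, true_and] at hx
      simp only [Finset.mem_Iio]
      by_contra hxj
      push_neg at hxj
      have hmono := β.monotone hxj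
      rw [Fin.le_def] at hmono
      omega
    have hc := Finset.card_le_card hsub
    rw [Fin.card_Iio] at hc
    exact absurd h (by unfold sigmaIdx; omega)
  · intro h
    have hsub : Finset.Iic j ⊆ (Finset.univ.filter fun j' : Fin m => ((β j') : ℕ) < p) := by
      intro x hx
      simp only [Finset.mem_Iic] at hx
      simp only [Finset.mem_filter, Finset.mem_univ, true_and]
      have hmono := β.monotone hx
      rw [Fin.le_def] at hmono
      omega
    have hc := Finset.card_le_card hsub
    rw [Fin.card_Iic] at hc
    unfold sigmaIdx
    omega

/-- The first component of the splitting of `β` at `p`. -/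
def splitFst {m n : ℕ} (β : Fin m →o Fin n) (p : ℕ) : Fin (sigmaIdx β p) →o Fin p where
  toFun r := ⟨((β ⟨r.val, lt_of_lt_of_le r.2 (sigmaIdx_le β p)⟩) : ℕ),
    (lt_sigmaIdx_iff β p _).mp r.2⟩
  monotone' := by
    intro a b hab
    have h := β.monotone (show (⟨a.val, lt_of_lt_of_le a.2 (sigmaIdx_le β p)⟩ : Fin m) ≤
      ⟨b.val, lt_of_lt_of_le b.2 (sigmaIdx_le β p)⟩ from hab)
    exact h

/-- The second component of the splitting of `β` at `p`. -/
def splitSnd {m n : ℕ} (β : Fin m →o Fin n) (p : ℕ) (hp : p ≤ n) :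
    Fin (m - sigmaIdx β p) →o Fin (n - p) where
  toFun r := ⟨((β ⟨sigmaIdx β p + r.val, by have := r.2; omega⟩) : ℕ) - p, by
    have h1 := (β ⟨sigmaIdx β p + r.val, by have := r.2; omega⟩).2
    have h2 : ¬ ((sigmaIdx β p + r.val) < sigmaIdx β p) := by omega
    have h3 := (lt_sigmaIdx_iff β p ⟨sigmaIdx β p + r.val, by have := r.2; omega⟩).not.mp
      (by simpa using h2)
    simp only [not_lt] at h3
    omega⟩
  monotone' := by
    intro a b hab
    have hav : a.val ≤ b.val := hab
    dsimp only
    simp only [Fin.mk_le_mk]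
    apply Nat.sub_le_sub_right
    exact β.monotone (Fin.mk_le_mk.mpr (by omega))


/-- The functor `J : {−1, 0, …, k} ⥤ ([k] ↓ σₐ)` sending `j` to `(([j], [k−j−1]), id)`.
Here the object `b` of `Δₐ` has `b.len` elements (so `b = [k]` with `k = b.len − 1`), the
discrete category `Fin (b.len + 1)` encodes `{−1, 0, …, k}` via `p = j + 1`, and the comma
category `[k] ↓ σₐ` is `StructuredArrow b ordSumAug`. -/
def Jfun (b : AugSimplex) :
    Discrete (Fin (b.len + 1)) ⥤ StructuredArrow b ordSumAug :=
  Discrete.functor fun p => StructuredArrow.mk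
    (Y := ((⟨p.val⟩ : AugSimplex), (⟨b.len - p.val⟩ : AugSimplex)))
    (eqToHom (by
      apply AugSimplex.ext
      have := p.2
      show b.len = p.val + (b.len - p.val)
      omega))

theorem _root_.CategoryTheory.StructuredArrow.hom_ext_of_epi {C D : Type*} [Category C]
    [Category D] {S : D} {T : C ⥤ D} [T.Faithful] {X Y : StructuredArrow S T} [Epi X.hom]
    (f g : X ⟶ Y) : f = g :=
  StructuredArrow.hom_ext f g <| T.map_injective <| (cancel_epi X.hom).mp <|
    (StructuredArrow.w f).trans (StructuredArrow.w g).symm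

theorem ordJoin_apply_of_lt {m n m' n' : ℕ} (f : Fin m →o Fin m') (g : Fin n →o Fin n')
    (i : Fin (m + n)) (h : (i : ℕ) < m) : ordJoin f g i = Fin.castAdd n' (f ⟨i, h⟩) :=
  dif_pos h

theorem ordJoin_apply_of_le {m n m' n' : ℕ} (f : Fin m →o Fin m') (g : Fin n →o Fin n')
    (i : Fin (m + n)) (h : m ≤ (i : ℕ)) :
    ordJoin f g i = Fin.natAdd m' (g ⟨(i : ℕ) - m, by omega⟩) :=
  dif_neg (by omega)

theorem ordJoin_injective {m n m' n' : ℕ} :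
    Function.Injective fun fg : (Fin m →o Fin m') × (Fin n →o Fin n') => ordJoin fg.1 fg.2 := by
  rintro ⟨f, g⟩ ⟨f', g'⟩ h
  have h := DFunLike.congr_fun h
  refine Prod.ext (OrderHom.ext _ _ (funext fun i => ?_)) (OrderHom.ext _ _ (funext fun i => ?_))
  · simpa [ordJoin_apply_of_lt _ _ (Fin.castAdd n i) i.2] using h (Fin.castAdd n i)
  · simpa [ordJoin_apply_of_le _ _ (Fin.natAdd m i) (by simp)] using h (Fin.natAdd m i)

theorem sigmaIdx_ordJoin {m n m' n' : ℕ} (f : Fin m →o Fin m') (g : Fin n →o Fin n') :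
    sigmaIdx (ordJoin f g) m' = m := by
  have hsplit : ∀ i : Fin (m + n), ((ordJoin f g i : ℕ) < m' ↔ (i : ℕ) < m) := by
    intro i
    rcases lt_or_ge (i : ℕ) m with h | h
    · simp [ordJoin_apply_of_lt f g i h, h]
    · simp [ordJoin_apply_of_le f g i h, h.not_gt]
  simp only [sigmaIdx, hsplit, Fin.card_filter_val_lt]
  omega

def splitSnd' {m n₁ n₂ : ℕ} (β : Fin m →o Fin (n₁ + n₂)) :
    Fin (m - sigmaIdx β n₁) →o Fin n₂ :=
  (Fin.castOrderIso (Nat.add_sub_cancel_left n₁ n₂) : Fin _ →o Fin _).comp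
    (splitSnd β n₁ (Nat.le_add_right n₁ n₂))

theorem ordJoin_splitFst_splitSnd' {m n₁ n₂ : ℕ} (β : Fin m →o Fin (n₁ + n₂)) :
    (ordJoin (splitFst β n₁) (splitSnd' β)).comp
      (Fin.castOrderIso (Nat.add_sub_of_le (sigmaIdx_le β n₁)).symm : Fin _ →o Fin _) = β := by
  ext i : 3
  simp only [OrderHom.comp_coe, OrderHomClass.coe_coe, Function.comp_apply, Fin.castOrderIso_apply]
  rcases lt_or_ge (i : ℕ) (sigmaIdx β n₁) with h | h
  · rw [ordJoin_apply_of_lt _ _ (Fin.cast _ i) h]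
    rfl
  · have hβ : n₁ ≤ (β i : ℕ) := not_lt.mp ((lt_sigmaIdx_iff β n₁ i).not.mp (by omega))
    rw [ordJoin_apply_of_le _ _ (Fin.cast _ i) h]
    show n₁ + ((β ⟨_ + (i - _), _⟩ : ℕ) - n₁) = β i
    simp only [Nat.add_sub_cancel' h, Nat.add_sub_cancel' hβ]

theorem AugSimplex.eqToHom_eq_castOrderIso {a a' : AugSimplex} (h : a = a') :
    eqToHom h = (Fin.castOrderIso (congrArg AugSimplex.len h) : Fin a.len →o Fin a'.len) := by
  subst h
  rfl

theorem sigmaIdx_eqToHom_comp {a a' a'' : AugSimplex} (h : a = a') (f : a' ⟶ a'') (p : ℕ) :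
    sigmaIdx (eqToHom h ≫ f) p = sigmaIdx f p := by
  subst h
  rfl

instance : ordSumAug.Faithful where
  map_injective h := ordJoin_injective h

instance (b : AugSimplex) (j : Discrete (Fin (b.len + 1))) : IsIso ((Jfun b).obj j).hom := by
  dsimp only [Jfun, Discrete.functor_obj_eq_as, StructuredArrow.mk_hom_eq_self]
  infer_instance

theorem Jfun_obj_as_eq_sigmaIdx {b : AugSimplex} {c : StructuredArrow b ordSumAug}
    {j : Discrete (Fin (b.len + 1))} (f : (Jfun b).obj j ⟶ c) :
    (j.as : ℕ) = sigmaIdx c.hom c.right.1.len := by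
  rw [← StructuredArrow.w f]
  dsimp only [Jfun, Discrete.functor_obj_eq_as, StructuredArrow.mk_hom_eq_self]
  rw [sigmaIdx_eqToHom_comp]
  exact (sigmaIdx_ordJoin _ _).symm

instance (b : AugSimplex) (c : StructuredArrow b ordSumAug) :
    Subsingleton (CostructuredArrow (Jfun b) c) where
  allEq := by
    rintro ⟨⟨j⟩, ⟨⟨⟩⟩, f⟩ ⟨⟨j'⟩, ⟨⟨⟩⟩, f'⟩
    obtain rfl : j = j' :=
      Fin.ext ((Jfun_obj_as_eq_sigmaIdx f).trans (Jfun_obj_as_eq_sigmaIdx f').symm)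
    obtain rfl := StructuredArrow.hom_ext_of_epi f f'
    rfl

instance (b : AugSimplex) (c : StructuredArrow b ordSumAug) :
    Nonempty (CostructuredArrow (Jfun b) c) := by
  let β : Fin b.len →o Fin (c.right.1.len + c.right.2.len) := c.hom
  let j : Discrete (Fin (b.len + 1)) := ⟨⟨_, Nat.lt_succ_of_le (sigmaIdx_le β c.right.1.len)⟩⟩
  let f : (Jfun b).obj j ⟶ c := StructuredArrow.homMk (splitFst β _, splitSnd' β) (by
    dsimp only [Jfun, Discrete.functor_obj_eq_as, StructuredArrow.mk_hom_eq_self]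
    rw [AugSimplex.eqToHom_eq_castOrderIso]
    exact ordJoin_splitFst_splitSnd' β)
  exact ⟨CostructuredArrow.mk f⟩

/-- **Lemma 2.13 (`finality`).**
For every `k ≥ −1` (i.e. for every object `b` of the augmented simplex category), the functor
`J : {−1, 0, 1, …, k} ⥤ ([k] ↓ σₐ)` from the discrete category to the comma category of the
ordinal sum functor `σₐ : Δₐ × Δₐ ⥤ Δₐ` under `[k]`, given by `j ↦ (([j], [k−j−1]), id)`,
is an initial functor (equivalently, its opposite is a final functor). -/
theorem discrete_to_comma_initial (b : AugSimplex) : (Jfun b).Initial :=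
  ⟨fun _ => inferInstance⟩

end OrdSum
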